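/- arXiv:1202.1411 — 2 statements merged into one kernel-verified Lean document; each statement's English description precedes it below -/
import Mathlib

section
/- Let N : ℝⁿ → ℝ^{n×n} be a linear map satisfying xᵀN(x)x = 0 for all x ∈ ℝⁿ. Let A ∈ ℝ^{n×n}, and for d ∈ ℝⁿ define A_d x := Ax + N(x)d + N(d)x. Suppose there exist d ∈ ℝⁿ and α > 0 such that vᵀ(A_d)v ≤ -α‖v‖² for all v. Then for any r ≥ (1/α)‖Ad + N(d)d‖₂, the closed ball B_r(d) is invariant for the ODE ẋ = Ax + N(x)x: if x(t₀) ∈ B_r(d), then x(t) ∈ B_r(d) for all t ≥ t₀. -/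
/-!
Write `x = d + e`. Energy preservation kills the cubic term `e ⬝ᵥ N(e) e`, so
`e ⬝ᵥ ẋ = e ⬝ᵥ A_d e + e ⬝ᵥ (A d + N(d) d) ≤ ‖e‖ (‖A d + N(d) d‖ - α ‖e‖)`,
which is negative as soon as `‖e‖ > r`. Hence `‖x - d‖²` cannot cross `r²` upwards, by the
fencing theorem `image_le_of_deriv_right_lt_deriv_boundary` applied to the barriers `r² + ε`.
-/

open Matrix

/-- Euclidean norm on `Fin n → ℝ`. -/
noncomputable def eucNorm {n : ℕ} (v : Fin n → ℝ) : ℝ := Real.sqrt (∑ i, v i ^ 2)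

open Set

theorem image_le_of_deriv_right_neg_of_gt {f f' : ℝ → ℝ} {a b R : ℝ}
    (hf : ContinuousOn f (Icc a b))
    (hf' : ∀ x ∈ Ico a b, HasDerivWithinAt f (f' x) (Ici x) x) (ha : f a ≤ R)
    (hneg : ∀ x ∈ Ico a b, R < f x → f' x < 0) :
    ∀ ⦃x⦄, x ∈ Icc a b → f x ≤ R := fun x hx =>
  le_of_forall_pos_le_add fun ε hε =>
    image_le_of_deriv_right_lt_deriv_boundary hf hf' (B := fun _ => R + ε) (by linarith)
      (fun _ => hasDerivAt_const _ _) (fun y hy hfy => hneg y hy (by linarith)) hx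

theorem HasDerivAt.dotProduct {ι : Type*} [Fintype ι] {f g : ℝ → ι → ℝ} {f' g' : ι → ℝ}
    {t : ℝ} (hf : HasDerivAt f f' t) (hg : HasDerivAt g g' t) :
    HasDerivAt (fun s => f s ⬝ᵥ g s) (f' ⬝ᵥ g t + f t ⬝ᵥ g') t := by
  show HasDerivAt (fun s => ∑ i, f s i * g s i) (∑ i, f' i * g t i + ∑ i, f t i * g' i) t
  rw [← Finset.sum_add_distrib]
  exact HasDerivAt.fun_sum fun i _ => by
    simpa [mul_comm] using (hasDerivAt_pi.1 hf i).fun_mul (hasDerivAt_pi.1 hg i)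

theorem eucNorm_nonneg {n : ℕ} (v : Fin n → ℝ) : 0 ≤ eucNorm v := Real.sqrt_nonneg _

theorem sq_eucNorm {n : ℕ} (v : Fin n → ℝ) : eucNorm v ^ 2 = v ⬝ᵥ v := by
  rw [eucNorm, Real.sq_sqrt (Finset.sum_nonneg fun i _ => sq_nonneg _)]
  simp only [dotProduct, sq]

theorem dotProduct_le_eucNorm_mul_eucNorm {n : ℕ} (v w : Fin n → ℝ) :
    v ⬝ᵥ w ≤ eucNorm v * eucNorm w := by
  calc v ⬝ᵥ w ≤ √((v ⬝ᵥ w) ^ 2) := (le_abs_self _).trans_eq (Real.sqrt_sq_eq_abs _).symm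
    _ ≤ √((∑ i, v i ^ 2) * ∑ i, w i ^ 2) :=
      Real.sqrt_le_sqrt (Finset.sum_mul_sq_le_sq_mul_sq _ v w)
    _ = eucNorm v * eucNorm w := Real.sqrt_mul (Finset.sum_nonneg fun i _ => sq_nonneg _) _

section

variable {ι R : Type*} [Fintype ι] [CommRing R] (A : Matrix ι ι R) {N : (ι → R) →ₗ[R] Matrix ι ι R}

theorem dotProduct_quadratic_field_eq (hN : ∀ x, x ⬝ᵥ N x *ᵥ x = 0) (e d : ι → R) :
    e ⬝ᵥ (A *ᵥ (e + d) + N (e + d) *ᵥ (e + d)) =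
      e ⬝ᵥ (A *ᵥ e + N e *ᵥ d + N d *ᵥ e) + e ⬝ᵥ (A *ᵥ d + N d *ᵥ d) := by
  simp only [map_add, mulVec_add, add_mulVec, dotProduct_add, hN e]
  ring

end

theorem dotProduct_quadratic_field_neg {n : ℕ} {A : Matrix (Fin n) (Fin n) ℝ}
    {N : (Fin n → ℝ) →ₗ[ℝ] Matrix (Fin n) (Fin n) ℝ} (hN : ∀ x, x ⬝ᵥ N x *ᵥ x = 0)
    {d : Fin n → ℝ} {α : ℝ} (hα : 0 < α)
    (hAd : ∀ v, v ⬝ᵥ (A *ᵥ v + N v *ᵥ d + N d *ᵥ v) ≤ -α * eucNorm v ^ 2)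
    {r : ℝ} (hr : (1 / α) * eucNorm (A *ᵥ d + N d *ᵥ d) ≤ r)
    {e : Fin n → ℝ} (he : r < eucNorm e) :
    e ⬝ᵥ (A *ᵥ (e + d) + N (e + d) *ᵥ (e + d)) < 0 := by
  set c := eucNorm (A *ᵥ d + N d *ᵥ d)
  have hcr : c ≤ α * r := by rwa [one_div, inv_mul_le_iff₀ hα] at hr
  have he0 : 0 < eucNorm e :=
    ((mul_nonneg (by positivity) (eucNorm_nonneg _)).trans hr).trans_lt he
  calc e ⬝ᵥ (A *ᵥ (e + d) + N (e + d) *ᵥ (e + d))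
      = e ⬝ᵥ (A *ᵥ e + N e *ᵥ d + N d *ᵥ e) + e ⬝ᵥ (A *ᵥ d + N d *ᵥ d) :=
        dotProduct_quadratic_field_eq A hN e d
    _ ≤ -α * eucNorm e ^ 2 + eucNorm e * c :=
        add_le_add (hAd e) (dotProduct_le_eucNorm_mul_eucNorm _ _)
    _ = eucNorm e * (c - α * eucNorm e) := by ring
    _ < 0 := mul_neg_of_pos_of_neg he0 (by nlinarith)

/-- Invariance of the ball `B_r(d)` for `ẋ = Ax + N(x)x` under `A_d + αI ⪯ 0`. -/
theorem stmt0 {n : ℕ} (A : Matrix (Fin n) (Fin n) ℝ)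
    (N : (Fin n → ℝ) →ₗ[ℝ] Matrix (Fin n) (Fin n) ℝ)
    (hN : ∀ x : Fin n → ℝ, x ⬝ᵥ (N x).mulVec x = 0)
    (d : Fin n → ℝ) (α : ℝ) (hα : 0 < α)
    (hAd : ∀ v : Fin n → ℝ,
      v ⬝ᵥ (A.mulVec v + (N v).mulVec d + (N d).mulVec v) ≤ -α * eucNorm v ^ 2)
    (r : ℝ) (hr : (1 / α) * eucNorm (A.mulVec d + (N d).mulVec d) ≤ r)
    (x : ℝ → Fin n → ℝ)
    (hx : ∀ t : ℝ, HasDerivAt x (A.mulVec (x t) + (N (x t)).mulVec (x t)) t)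
    (t₀ : ℝ) (hx0 : eucNorm (x t₀ - d) ≤ r) :
    ∀ t : ℝ, t₀ ≤ t → eucNorm (x t - d) ≤ r := by
  have hr0 : 0 ≤ r := (eucNorm_nonneg _).trans hx0
  have hV : ∀ s, HasDerivAt (fun s => (x s - d) ⬝ᵥ (x s - d))
      (2 * ((x s - d) ⬝ᵥ (A *ᵥ x s + N (x s) *ᵥ x s))) s := fun s => by
    convert ((hx s).sub_const d).dotProduct ((hx s).sub_const d) using 1
    rw [dotProduct_comm]; ring
  have hV₀ : (x t₀ - d) ⬝ᵥ (x t₀ - d) ≤ r ^ 2 := by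
    rw [← sq_eucNorm]; exact pow_le_pow_left₀ (eucNorm_nonneg _) hx0 2
  intro t ht
  have hVt : (x t - d) ⬝ᵥ (x t - d) ≤ r ^ 2 := by
    refine image_le_of_deriv_right_neg_of_gt (fun s _ => (hV s).continuousAt.continuousWithinAt)
      (fun s _ => (hV s).hasDerivWithinAt) hV₀ ?_ ⟨ht, le_rfl⟩
    intro s _ hs
    rw [← sq_eucNorm] at hs
    have hneg := dotProduct_quadratic_field_neg hN hα hAd hr
      (lt_of_pow_lt_pow_left₀ 2 (eucNorm_nonneg _) hs)
    rw [sub_add_cancel] at hneg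
    linarith
  rwa [← sq_eucNorm, pow_le_pow_iff_left₀ (eucNorm_nonneg _) hr0 two_ne_zero] at hVt
end

section
/- Let Λ = diag(λ₁,…,λₙ) with all λᵢ > 0, Re > 0, c ∈ ℝⁿ, and let N be linear and energy preserving. Consider ẋ = Ax + N(x)x with Ax := −(1/Re)Λx + N(c)x + N(x)c. Then A_{−c} = −(1/Re)Λ ≺ 0, and consequently there exists r > 0 such that the closed ball B_r(−c) is invariant for the dynamics. -/
/-!
Shifting the state by `c` turns the dynamics into `ẏ = -(1/Re) Λ y + N(y) y + b` with the
constant forcing `b = A(-c) + N(-c)(-c)`. The quadratic term does no work on `y`, and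
`⟪y, Λ y⟫ ≥ λ_min ‖y‖²`, so `d/dt ‖y‖² ≤ 2 ‖y‖ (‖b‖ - (λ_min / Re) ‖y‖)`. Hence the flow points
strictly inwards on every sphere of radius `r > Re ‖b‖ / λ_min`, and the ball of that radius
around `-c` is forward invariant.
-/

open Matrix

/-- Euclidean norm on `Fin n → ℝ`. -/
noncomputable def enorm {n : ℕ} (v : Fin n → ℝ) : ℝ := Real.sqrt (∑ i, v i ^ 2)

open scoped RealInnerProductSpace

section Trapping

variable {E : Type*} [NormedAddCommGroup E] [InnerProductSpace ℝ E]

theorem norm_le_of_inner_neg_on_sphere {F : E → E} {r : ℝ} (hF : ∀ v, ‖v‖ = r → ⟪v, F v⟫ < 0)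
    {y : ℝ → E} (hy : ∀ t, HasDerivAt y (F (y t)) t) {t₀ t : ℝ} (ht : t₀ ≤ t)
    (h₀ : ‖y t₀‖ ≤ r) : ‖y t‖ ≤ r := by
  have hr : 0 ≤ r := (norm_nonneg _).trans h₀
  have hsq : ‖y t‖ ^ 2 ≤ r ^ 2 :=
    image_le_of_deriv_right_lt_deriv_boundary (B := fun _ => r ^ 2)
      (fun s _ => (hy s).norm_sq.continuousAt.continuousWithinAt)
      (fun s _ => (hy s).norm_sq.hasDerivWithinAt) (pow_le_pow_left₀ (norm_nonneg _) h₀ 2)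
      (fun _ => hasDerivAt_const _ _)
      (fun s _ hs => by
        have : ‖y s‖ = r := by
          rw [← Real.sqrt_sq (norm_nonneg _), hs, Real.sqrt_sq hr]
        linarith [hF _ this])
      ⟨ht, le_rfl⟩
  exact (pow_le_pow_iff_left₀ (norm_nonneg _) hr two_ne_zero).1 hsq

theorem inner_add_add_neg_of_dissipative {L B : E → E} {α : ℝ}
    (hL : ∀ v, ⟪v, L v⟫ ≤ -α * ‖v‖ ^ 2) (hB : ∀ v, ⟪v, B v⟫ = 0) {b v : E}
    (hv : ‖b‖ < α * ‖v‖) : ⟪v, L v + B v + b⟫ < 0 := by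
  have hb : ⟪v, b⟫ ≤ ‖v‖ * ‖b‖ := real_inner_le_norm v b
  have hv₀ : 0 < ‖v‖ :=
    (norm_nonneg v).lt_of_ne fun h => by simp [← h] at hv; exact (norm_nonneg b).not_gt hv
  rw [inner_add_right, inner_add_right, hB]
  nlinarith [hL v]

theorem norm_le_of_dissipative {L B : E → E} {α : ℝ}
    (hL : ∀ v, ⟪v, L v⟫ ≤ -α * ‖v‖ ^ 2) (hB : ∀ v, ⟪v, B v⟫ = 0) {b : E} {r : ℝ}
    (hr : ‖b‖ < α * r) {y : ℝ → E} (hy : ∀ t, HasDerivAt y (L (y t) + B (y t) + b) t)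
    {t₀ t : ℝ} (ht : t₀ ≤ t) (h₀ : ‖y t₀‖ ≤ r) : ‖y t‖ ≤ r :=
  norm_le_of_inner_neg_on_sphere
    (fun _ hv => inner_add_add_neg_of_dissipative hL hB (hv ▸ hr)) hy ht h₀

end Trapping

theorem exists_pos_forall_le_of_pos {ι : Type*} [Finite ι] {f : ι → ℝ} (hf : ∀ i, 0 < f i) :
    ∃ α > 0, ∀ i, α ≤ f i := by
  cases isEmpty_or_nonempty ι
  · exact ⟨1, one_pos, isEmptyElim⟩
  · obtain ⟨i, hi⟩ := Finite.exists_min f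
    exact ⟨f i, hf i, hi⟩

section Matrix

variable {ι R : Type*} [Fintype ι]

theorem le_dotProduct_diagonal_mulVec [DecidableEq ι] [CommRing R] [LinearOrder R]
    [IsStrictOrderedRing R] {lam : ι → R} {α : R} (h : ∀ i, α ≤ lam i) (v : ι → R) :
    α * (v ⬝ᵥ v) ≤ v ⬝ᵥ diagonal lam *ᵥ v := by
  simp only [dotProduct, mulVec_diagonal, Finset.mul_sum]
  refine Finset.sum_le_sum fun i _ => ?_
  nlinarith [h i, mul_self_nonneg (v i)]

theorem add_quadratic_eq_shift [CommRing R] (M : (ι → R) →ₗ[R] ι → R)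
    (N : (ι → R) →ₗ[R] Matrix ι ι R) (c x : ι → R) :
    M x + N c *ᵥ x + N x *ᵥ c + N x *ᵥ x
      = M (x + c) + N (x + c) *ᵥ (x + c) - (M c + N c *ᵥ c) := by
  simp only [map_add, add_mulVec, mulVec_add]
  abel

end Matrix

section EuclideanSpace

variable {ι : Type*} [Fintype ι]

theorem enorm_eq_norm_toLp {n : ℕ} (v : Fin n → ℝ) : _root_.enorm v = ‖WithLp.toLp 2 v‖ := by
  simp [_root_.enorm, EuclideanSpace.norm_eq]

theorem EuclideanSpace.real_inner_eq_dotProduct (v w : EuclideanSpace ℝ ι) :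
    ⟪v, w⟫ = v.ofLp ⬝ᵥ w.ofLp := by
  simp [EuclideanSpace.inner_eq_star_dotProduct, dotProduct_comm]

theorem EuclideanSpace.inner_smul_diagonal_le [DecidableEq ι] {lam : ι → ℝ} {α κ : ℝ}
    (hα : ∀ i, α ≤ lam i) (hκ : 0 ≤ κ) (w : EuclideanSpace ℝ ι) :
    ⟪w, WithLp.toLp 2 (-κ • diagonal lam *ᵥ w.ofLp)⟫ ≤ -(κ * α) * ‖w‖ ^ 2 := by
  rw [← real_inner_self_eq_norm_sq, real_inner_eq_dotProduct, real_inner_eq_dotProduct,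
    WithLp.ofLp_toLp, dotProduct_smul, smul_eq_mul, neg_mul, neg_mul, neg_le_neg_iff, mul_assoc]
  exact mul_le_mul_of_nonneg_left (le_dotProduct_diagonal_mulVec hα _) hκ

theorem HasDerivAt.toLp_euclideanSpace {f : ℝ → ι → ℝ} {f' : ι → ℝ} {s : ℝ}
    (h : HasDerivAt f f' s) :
    HasDerivAt (fun t => (WithLp.toLp 2 (f t) : EuclideanSpace ℝ ι)) (WithLp.toLp 2 f') s :=
  (EuclideanSpace.equiv ι ℝ).symm.hasFDerivAt.comp_hasDerivAt s h

end EuclideanSpace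

/-- For fluid-type dynamics `ẋ = Ax + N(x)x` with
`Ax = −(1/Re)Λx + N(c)x + N(x)c` (`Λ = diag(λ) ≻ 0`), the perturbed matrix satisfies
`A_{−c} = −(1/Re)Λ ≺ 0`, and there is an invariant ball `B_r(−c)` for the dynamics. -/
theorem stmt17 {n : ℕ} (Re : ℝ) (hRe : 0 < Re)
    (lam : Fin n → ℝ) (hlam : ∀ i, 0 < lam i) (c : Fin n → ℝ)
    (N : (Fin n → ℝ) →ₗ[ℝ] Matrix (Fin n) (Fin n) ℝ)
    (hN : ∀ x : Fin n → ℝ, x ⬝ᵥ (N x).mulVec x = 0)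
    (A : (Fin n → ℝ) → Fin n → ℝ)
    (hA : ∀ v, A v = -(1 / Re) • (Matrix.diagonal lam).mulVec v
      + (N c).mulVec v + (N v).mulVec c) :
    (∀ v : Fin n → ℝ,
        A v + (N v).mulVec (-c) + (N (-c)).mulVec v
          = -(1 / Re) • (Matrix.diagonal lam).mulVec v) ∧
      ∃ r : ℝ, 0 < r ∧ ∀ x : ℝ → Fin n → ℝ,
        (∀ t : ℝ, HasDerivAt x (A (x t) + (N (x t)).mulVec (x t)) t) →
        ∀ t₀ t : ℝ, t₀ ≤ t → _root_.enorm (x t₀ - -c) ≤ r → _root_.enorm (x t - -c) ≤ r := by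
  refine ⟨fun v => by rw [hA, map_neg, neg_mulVec, mulVec_neg]; abel, ?_⟩
  obtain ⟨α, hα, hαlam⟩ := exists_pos_forall_le_of_pos hlam
  let M : (Fin n → ℝ) →ₗ[ℝ] Fin n → ℝ := -(1 / Re) • (diagonal lam).mulVecLin
  let L : EuclideanSpace ℝ (Fin n) → EuclideanSpace ℝ (Fin n) := fun w => .toLp 2 (M w.ofLp)
  let B : EuclideanSpace ℝ (Fin n) → EuclideanSpace ℝ (Fin n) :=
    fun w => .toLp 2 (N w.ofLp *ᵥ w.ofLp)
  let b : EuclideanSpace ℝ (Fin n) := .toLp 2 (-(M c + N c *ᵥ c))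
  have hL : ∀ w, ⟪w, L w⟫ ≤ -(1 / Re * α) * ‖w‖ ^ 2 :=
    EuclideanSpace.inner_smul_diagonal_le hαlam (by positivity)
  have hB : ∀ w, ⟪w, B w⟫ = 0 := fun w => by
    simpa [B, EuclideanSpace.real_inner_eq_dotProduct] using hN w.ofLp
  have hshift : ∀ v, A v + N v *ᵥ v = M (v + c) + N (v + c) *ᵥ (v + c) + -(M c + N c *ᵥ c) :=
    fun v => by rw [hA, ← sub_eq_add_neg, ← add_quadratic_eq_shift]; rfl
  refine ⟨‖b‖ / (1 / Re * α) + 1, by positivity, fun x hx t₀ t ht h₀ => ?_⟩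
  have hy : ∀ s, HasDerivAt (fun s => WithLp.toLp 2 (x s + c))
      (L (.toLp 2 (x s + c)) + B (.toLp 2 (x s + c)) + b) s := fun s =>
    ((hx s).add_const c).toLp_euclideanSpace.congr_deriv (by rw [hshift]; rfl)
  rw [enorm_eq_norm_toLp, sub_neg_eq_add] at h₀ ⊢
  refine norm_le_of_dissipative hL hB ?_ hy ht h₀
  field_simp
  linarith
end
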